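/- arXiv:1909.02963 — 6 statements merged into one kernel-verified Lean document; each statement's English description precedes it below -/
import Mathlib

section
/- If A and B are invertible matrices such that A - B and A B⁻¹ A - A are also invertible, then (A - B)⁻¹ = A⁻¹ + (A B⁻¹ A - A)⁻¹. -/
open Matrix

theorem inv_sub_eq_inv_add_inv {n : ℕ}
    (A B : Matrix (Fin n) (Fin n) ℝ)
    (hA : IsUnit A.det) (hB : IsUnit B.det)
    (hAB : IsUnit (A - B).det)
    (hABA : IsUnit (A * B⁻¹ * A - A).det) :
    (A - B)⁻¹ = A⁻¹ + (A * B⁻¹ * A - A)⁻¹ := by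
  have hC : A * B⁻¹ * A - A = A * B⁻¹ * (A - B) := by
    rw [Matrix.mul_sub, Matrix.mul_assoc A B⁻¹ B, Matrix.nonsing_inv_mul B hB, Matrix.mul_one]
  have hCinv : (A * B⁻¹ * A - A)⁻¹ = (A - B)⁻¹ * (B * A⁻¹) := by
    rw [hC, Matrix.mul_inv_rev, Matrix.mul_inv_rev, Matrix.nonsing_inv_nonsing_inv B hB]
  apply Matrix.inv_eq_right_inv
  rw [hCinv, Matrix.mul_add, Matrix.sub_mul, Matrix.mul_nonsing_inv A hA,
    ← Matrix.mul_assoc, Matrix.mul_nonsing_inv (A - B) hAB, Matrix.one_mul]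
  abel
end

section
/- Suppose 0 ≤ γ < 1, c ≤ γ y², and λ ≥ (γ/(1-γ)) ‖x‖². Then the (d+1)×(d+1) block matrix [[y² - c, y xᵀ],[x y, λ I + x xᵀ]] is positive semidefinite. -/
/-!
Writing `w = ((1 - γ) y, x)`, the matrix splits as
`diag(γ y² - c, λ I - γ/(1-γ) x xᵀ) + (1 - γ)⁻¹ w wᵀ`.
The rank-one term is positive semidefinite, the first diagonal block is nonnegative since
`c ≤ γ y²`, and the second one is positive semidefinite by Cauchy–Schwarz since
`λ ≥ γ/(1-γ) ‖x‖²`.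
-/

open Matrix

namespace Matrix

theorem vecMulVec_sumElim {m n l o R : Type*} [Mul R] (a : m → R) (b : n → R) (c : l → R)
    (e : o → R) :
    vecMulVec (Sum.elim a b) (Sum.elim c e) =
      fromBlocks (vecMulVec a c) (vecMulVec a e) (vecMulVec b c) (vecMulVec b e) := by
  ext (i | i) (j | j) <;> rfl

variable {m n R : Type*} [Fintype m] [Fintype n]

theorem PosSemidef.fromBlocks_zero_zero [CommRing R] [PartialOrder R] [StarRing R]
    [IsOrderedAddMonoid R] {A : Matrix m m R} {D : Matrix n n R}
    (hA : A.PosSemidef) (hD : D.PosSemidef) : (fromBlocks A 0 0 D).PosSemidef := by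
  refine .of_dotProduct_mulVec_nonneg (hA.isHermitian.fromBlocks (by simp) hD.isHermitian)
    fun v => ?_
  rw [← Sum.elim_comp_inl_inr v, fromBlocks_mulVec, Function.star_sumElim,
    sumElim_dotProduct_sumElim]
  simpa using add_nonneg (hA.dotProduct_mulVec_nonneg _) (hD.dotProduct_mulVec_nonneg _)

theorem posSemidef_smul_one_sub_smul_vecMulVec [DecidableEq n] {x : n → ℝ} {lam μ : ℝ}
    (hμ : 0 ≤ μ) (hlam : μ * (x ⬝ᵥ x) ≤ lam) :
    (lam • (1 : Matrix n n ℝ) - μ • vecMulVec x x).PosSemidef := by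
  refine .of_dotProduct_mulVec_nonneg (by simp [IsHermitian]) fun u => ?_
  have cauchy_schwarz : (x ⬝ᵥ u) ^ 2 ≤ (x ⬝ᵥ x) * (u ⬝ᵥ u) := by
    simpa only [dotProduct, sq] using Finset.sum_mul_sq_le_sq_mul_sq Finset.univ x u
  have huu : 0 ≤ u ⬝ᵥ u := by simpa using dotProduct_self_star_nonneg u
  simp only [sub_mulVec, smul_mulVec, one_mulVec, vecMulVec_mulVec, star_trivial,
    dotProduct_sub, dotProduct_smul, dotProduct_comm u x, op_smul_eq_mul, smul_eq_mul,
    sub_nonneg]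
  calc μ * ((x ⬝ᵥ u) * (x ⬝ᵥ u)) ≤ μ * ((x ⬝ᵥ x) * (u ⬝ᵥ u)) := by
        rw [← sq]; exact mul_le_mul_of_nonneg_left cauchy_schwarz hμ
    _ ≤ lam * (u ⬝ᵥ u) := by rw [← mul_assoc]; exact mul_le_mul_of_nonneg_right hlam huu

end Matrix

theorem block_matrix_posSemidef {d : ℕ}
    (x : Fin d → ℝ) (y c γ lam : ℝ)
    (hγ0 : 0 ≤ γ) (hγ1 : γ < 1)
    (hc : c ≤ γ * y ^ 2)
    (hlam : lam ≥ γ / (1 - γ) * ∑ i, x i ^ 2) :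
    (fromBlocks
      (Matrix.of fun (_ : Unit) (_ : Unit) => y ^ 2 - c)
      (Matrix.of fun (_ : Unit) i => y * x i)
      (Matrix.of fun i (_ : Unit) => x i * y)
      (lam • (1 : Matrix (Fin d) (Fin d) ℝ) + vecMulVec x x)).PosSemidef := by
  have h1γ : 0 < 1 - γ := sub_pos.mpr hγ1
  set w : Unit ⊕ Fin d → ℝ := Sum.elim (fun _ => (1 - γ) * y) x
  have hdiag :
      (lam • (1 : Matrix (Fin d) (Fin d) ℝ) - (γ / (1 - γ)) • vecMulVec x x).PosSemidef :=
    posSemidef_smul_one_sub_smul_vecMulVec (by positivity) (by simpa [dotProduct, sq] using hlam)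
  have hdecomp : (fromBlocks ((γ * y ^ 2 - c) • 1) 0 0
      (lam • 1 - (γ / (1 - γ)) • vecMulVec x x) + (1 - γ)⁻¹ • vecMulVec w w).PosSemidef :=
    .add (.fromBlocks_zero_zero (PosSemidef.one.smul (by linarith)) hdiag)
      ((posSemidef_vecMulVec_self_star w).smul (by positivity))
  convert hdecomp using 1
  rw [vecMulVec_sumElim, fromBlocks_smul, fromBlocks_add]
  congr 1 <;> ext <;> simp [vecMulVec_apply] <;> field_simp <;> ring
end

section
/- Suppose 0 ≤ γ < 1, c_k < γ y_k², and λ > (γ/(1-γ)) ‖x_k‖₂². Then c_k - y_k² + y_k² · x_kᵀ (λ I + x_k x_kᵀ)⁻¹ x_k < 0. -/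
open Matrix

/-!
The vector `x` is an eigenvector of `λ I + x xᵀ` with eigenvalue `λ + ‖x‖²`, so the quadratic form
equals `‖x‖² / (λ + ‖x‖²)`. The hypothesis on `λ` is exactly `‖x‖² / (λ + ‖x‖²) < 1 - γ`, hence
the expression is below `c - γ y² < 0`.
-/

section RankOneUpdate

variable {K n : Type*} [Fintype n] [DecidableEq n]

theorem smul_one_add_vecMulVec_self_mulVec [CommRing K] (lam : K) (x v : n → K) :
    (lam • (1 : Matrix n n K) + vecMulVec x x) *ᵥ v = lam • v + (x ⬝ᵥ v) • x := by
  rw [add_mulVec, smul_mulVec, one_mulVec, vecMulVec_mulVec, op_smul_eq_smul]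

variable [Field K] {lam : K} {x : n → K}

theorem isUnit_smul_one_add_vecMulVec_self (hlam : lam ≠ 0) (hx : lam + x ⬝ᵥ x ≠ 0) :
    IsUnit (lam • (1 : Matrix n n K) + vecMulVec x x) := by
  refine mulVec_injective_iff_isUnit.1 <|
    (injective_iff_map_eq_zero (lam • (1 : Matrix n n K) + vecMulVec x x).mulVecLin).2 ?_
  intro v hv
  rw [mulVecLin_apply, smul_one_add_vecMulVec_self_mulVec] at hv
  have hxv : x ⬝ᵥ v = 0 := by
    have h := congrArg (x ⬝ᵥ ·) hv
    simp only [dotProduct_add, dotProduct_smul, smul_eq_mul, dotProduct_zero] at h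
    have : (lam + x ⬝ᵥ x) * (x ⬝ᵥ v) = 0 := by linear_combination h
    exact (mul_eq_zero.1 this).resolve_left hx
  rw [hxv, zero_smul, add_zero] at hv
  exact (smul_eq_zero.1 hv).resolve_left hlam

theorem smul_one_add_vecMulVec_self_inv_mulVec (hlam : lam ≠ 0) (hx : lam + x ⬝ᵥ x ≠ 0) :
    (lam • (1 : Matrix n n K) + vecMulVec x x)⁻¹ *ᵥ x = (lam + x ⬝ᵥ x)⁻¹ • x := by
  have := (isUnit_smul_one_add_vecMulVec_self hlam hx).invertible
  refine inv_mulVec_eq_vec ?_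
  rw [smul_one_add_vecMulVec_self_mulVec, dotProduct_smul, smul_eq_mul, smul_smul, ← add_smul,
    mul_comm lam, ← mul_add, inv_mul_cancel₀ hx, one_smul]

theorem dotProduct_smul_one_add_vecMulVec_self_inv_mulVec (hlam : lam ≠ 0)
    (hx : lam + x ⬝ᵥ x ≠ 0) :
    x ⬝ᵥ (lam • (1 : Matrix n n K) + vecMulVec x x)⁻¹ *ᵥ x = x ⬝ᵥ x / (lam + x ⬝ᵥ x) := by
  rw [smul_one_add_vecMulVec_self_inv_mulVec hlam hx, dotProduct_smul, smul_eq_mul,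
    inv_mul_eq_div]

end RankOneUpdate

theorem div_add_self_lt_one_sub {γ lam s : ℝ} (hγ : γ < 1) (hpos : 0 < lam + s)
    (hlam : γ / (1 - γ) * s < lam) : s / (lam + s) < 1 - γ := by
  have hγ' : 0 < 1 - γ := sub_pos.2 hγ
  rw [div_mul_eq_mul_div, div_lt_iff₀ hγ'] at hlam
  rw [div_lt_iff₀ hpos]
  linarith

theorem human_loss_lt_general {d : ℕ}
    (x : Fin d → ℝ) (y c γ lam : ℝ)
    (hγ1 : γ < 1)
    (hlam0 : 0 < lam)
    (hc : c < γ * y ^ 2)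
    (hlam : lam > γ / (1 - γ) * ∑ i, x i ^ 2) :
    c - y ^ 2 + y ^ 2 * (x ⬝ᵥ (lam • (1 : Matrix (Fin d) (Fin d) ℝ) + vecMulVec x x)⁻¹.mulVec x) < 0 := by
  have hxx : x ⬝ᵥ x = ∑ i, x i ^ 2 := by simp only [dotProduct, sq]
  have hpos : 0 < lam + x ⬝ᵥ x := by
    have := dotProduct_self_star_nonneg x
    simp only [star_trivial] at this
    linarith
  rw [dotProduct_smul_one_add_vecMulVec_self_inv_mulVec hlam0.ne' hpos.ne']
  have hq := div_add_self_lt_one_sub hγ1 hpos (hxx ▸ hlam)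
  linarith [mul_le_mul_of_nonneg_left hq.le (sq_nonneg y)]

theorem human_loss_lt {d : ℕ}
    (x : Fin d → ℝ) (y c γ lam : ℝ)
    (hγ0 : 0 ≤ γ) (hγ1 : γ < 1)
    (hlam0 : 0 < lam)
    (hc : c < γ * y ^ 2)
    (hlam : lam > γ / (1 - γ) * ∑ i, x i ^ 2) :
    c - y ^ 2 + y ^ 2 * (x ⬝ᵥ (lam • (1 : Matrix (Fin d) (Fin d) ℝ) + vecMulVec x x)⁻¹.mulVec x) < 0 :=
  human_loss_lt_general x y c γ lam hγ1 hlam0 hc hlam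
end

section
/- Suppose γ < ρ < √γ with 0 ≤ γ < 1, ρ² y² < c, and λ < (ρ/(1-ρ)) ‖x‖₂². Then c > (y - xᵀ w*)², where w* = (λ I + x xᵀ)⁻¹ x y. -/
/-! Since `x` is an eigenvector of `λ I + x xᵀ` with eigenvalue `λ + ‖x‖²`, the ridge prediction on
the training sample is `y ‖x‖² / (λ + ‖x‖²)`, so the machine's residual is `y` shrunk by the factor
`λ / (λ + ‖x‖²)`. The bound on `λ` says exactly that this factor is below `ρ`, hence the squared
residual is below `ρ² y² < c`. -/

open Matrix

theorem dotProduct_self_nonneg {n R : Type*} [Fintype n] [Ring R] [LinearOrder R]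
    [IsStrictOrderedRing R] (v : n → R) : 0 ≤ v ⬝ᵥ v :=
  Finset.sum_nonneg fun i _ => mul_self_nonneg (v i)

section ShermanMorrison

variable {K n : Type*} [Field K] [Fintype n] [DecidableEq n]

theorem Matrix.inv_smul_one_add_vecMulVec {a : K} (u v : n → K) (ha : a ≠ 0)
    (hau : a + v ⬝ᵥ u ≠ 0) :
    (a • 1 + vecMulVec u v)⁻¹ = a⁻¹ • (1 - (a + v ⬝ᵥ u)⁻¹ • vecMulVec u v) := by
  refine inv_eq_right_inv ?_
  rw [Matrix.mul_smul, Matrix.mul_sub, Matrix.mul_one, Matrix.mul_smul, Matrix.add_mul,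
    Matrix.smul_mul, Matrix.one_mul, vecMulVec_mul_vecMulVec, vecMulVec_smul]
  match_scalars
  · field_simp
  · field_simp
    ring

theorem Matrix.inv_smul_one_add_vecMulVec_mulVec {a : K} (u v : n → K) (ha : a ≠ 0)
    (hau : a + v ⬝ᵥ u ≠ 0) :
    (a • 1 + vecMulVec u v)⁻¹ *ᵥ u = (a + v ⬝ᵥ u)⁻¹ • u := by
  rw [inv_smul_one_add_vecMulVec u v ha hau, smul_mulVec, sub_mulVec, one_mulVec, smul_mulVec,
    vecMulVec_mulVec, op_smul_eq_smul]
  match_scalars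
  field_simp
  ring

end ShermanMorrison

theorem ridge_residual_eq {n : Type*} [Fintype n] [DecidableEq n] (x : n → ℝ) (y : ℝ) {lam : ℝ}
    (hlam : 0 < lam) :
    y - x ⬝ᵥ (y • (lam • 1 + vecMulVec x x)⁻¹ *ᵥ x) = lam / (lam + x ⬝ᵥ x) * y := by
  have hpos : 0 < lam + x ⬝ᵥ x := add_pos_of_pos_of_nonneg hlam (dotProduct_self_nonneg x)
  rw [inv_smul_one_add_vecMulVec_mulVec x x hlam.ne' hpos.ne', dotProduct_smul, dotProduct_smul,
    smul_eq_mul, smul_eq_mul]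
  field_simp
  ring

theorem div_add_lt_of_lt_div_one_sub_mul {lam ρ s : ℝ} (hlam : 0 < lam) (hs : 0 ≤ s)
    (h : lam < ρ / (1 - ρ) * s) : lam / (lam + s) < ρ := by
  have hρ : ρ < 1 := by
    by_contra! hρ
    have hcoef : ρ / (1 - ρ) ≤ 0 := div_nonpos_of_nonneg_of_nonpos (by linarith) (by linarith)
    linarith [mul_nonpos_of_nonpos_of_nonneg hcoef hs]
  rw [div_mul_eq_mul_div, lt_div_iff₀ (by linarith)] at h
  rw [div_lt_iff₀ (by linarith)]
  linarith

theorem human_error_gt_machine_error_general {d : ℕ}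
    (x : Fin d → ℝ) (y c ρ lam : ℝ)
    (hc : ρ ^ 2 * y ^ 2 < c)
    (hlam0 : 0 < lam)
    (hlam : lam < ρ / (1 - ρ) * ∑ i, x i ^ 2) :
    c > (y - x ⬝ᵥ (y • (lam • (1 : Matrix (Fin d) (Fin d) ℝ) + vecMulVec x x)⁻¹.mulVec x)) ^ 2 := by
  have hs : ∑ i, x i ^ 2 = x ⬝ᵥ x := by simp only [dotProduct, sq]
  rw [hs] at hlam
  have hshrink := div_add_lt_of_lt_div_one_sub_mul hlam0 (dotProduct_self_nonneg x) hlam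
  have hnonneg : 0 ≤ lam / (lam + x ⬝ᵥ x) :=
    div_nonneg hlam0.le (add_nonneg hlam0.le (dotProduct_self_nonneg x))
  rw [ridge_residual_eq x y hlam0, mul_pow]
  calc (lam / (lam + x ⬝ᵥ x)) ^ 2 * y ^ 2 ≤ ρ ^ 2 * y ^ 2 := by gcongr
    _ < c := hc

theorem human_error_gt_machine_error {d : ℕ}
    (x : Fin d → ℝ) (y c γ ρ lam : ℝ)
    (hγ0 : 0 ≤ γ) (hγ1 : γ < 1)
    (hγρ : γ < ρ) (hρ : ρ < Real.sqrt γ)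
    (hc : ρ ^ 2 * y ^ 2 < c)
    (hlam0 : 0 < lam)
    (hlam : lam < ρ / (1 - ρ) * ∑ i, x i ^ 2) :
    c > (y - x ⬝ᵥ (y • (lam • (1 : Matrix (Fin d) (Fin d) ℝ) + vecMulVec x x)⁻¹.mulVec x)) ^ 2 :=
  human_error_gt_machine_error_general x y c ρ lam hc hlam0 hlam
end

section
/- Let M_S ⪰ M_T ≻ 0 be symmetric positive definite matrices and Q a matrix with M_T - Q Qᵀ ⪰ 0. Then det(I - Qᵀ M_S⁻¹ Q) ≥ det(I - Qᵀ M_T⁻¹ Q). -/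
/-!
For `M ≻ 0`, the matrix `1 - Qᵀ M⁻¹ Q` is the Schur complement of `M` in `[[M, Q], [Qᵀ, 1]]`,
whose other Schur complement is `M - Q Qᵀ`; so `M_T ⪰ Q Qᵀ` gives `1 - Qᵀ M_T⁻¹ Q ⪰ 0`.
Comparing the two Schur complements of `[[M_S, 1], [1, M_T⁻¹]]` shows that inversion is
antitone for the Loewner order, hence `1 - Qᵀ M_S⁻¹ Q ⪰ 1 - Qᵀ M_T⁻¹ Q ⪰ 0`. Finally the
determinant is monotone on positive semidefinite matrices: for `A ≻ 0`,
`det (A + Lᴴ L) = det A · det (1 + L A⁻¹ Lᴴ) ≥ det A`.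
-/

open Matrix

namespace Matrix

variable {ι κ : Type*} [Fintype ι] [DecidableEq ι] [Fintype κ] [DecidableEq κ]

theorem posSemidef_sub_conjTranspose_mul_inv_mul_iff {A : Matrix ι ι ℝ} {D : Matrix κ κ ℝ}
    (hA : A.PosDef) (hD : D.PosDef) (B : Matrix ι κ ℝ) :
    (D - Bᴴ * A⁻¹ * B).PosSemidef ↔ (A - B * D⁻¹ * Bᴴ).PosSemidef := by
  have := hA.isUnit.invertible
  have := hD.isUnit.invertible
  rw [← PosDef.fromBlocks₁₁ B D hA, PosDef.fromBlocks₂₂ A B hD]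

theorem PosDef.posSemidef_inv_sub_inv {A B : Matrix ι ι ℝ} (hA : A.PosDef) (hB : B.PosDef)
    (hAB : (B - A).PosSemidef) : (A⁻¹ - B⁻¹).PosSemidef := by
  have h := posSemidef_sub_conjTranspose_mul_inv_mul_iff hB hA.inv 1
  rw [nonsing_inv_nonsing_inv A ((isUnit_iff_isUnit_det A).mp hA.isUnit)] at h
  simpa using h.2 (by simpa using hAB)

theorem PosSemidef.one_le_det_one_add {X : Matrix ι ι ℝ} (hX : X.PosSemidef) :
    1 ≤ (1 + X).det := by
  have hH : (1 + X).IsHermitian := isHermitian_one.add hX.isHermitian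
  have one_le_eigenvalues (i : ι) : 1 ≤ hH.eigenvalues i := by
    have hi : hH.eigenvalues i ∈ spectrum ℝ (algebraMap ℝ (Matrix ι ι ℝ) 1 + X) := by
      rw [map_one]
      exact hH.eigenvalues_mem_spectrum_real i
    rw [← spectrum.singleton_add_eq, Set.singleton_add] at hi
    obtain ⟨μ, hμ, hμi⟩ := hi
    have hμ_nonneg : 0 ≤ μ := (posSemidef_iff_isHermitian_and_spectrum_nonneg.mp hX).2 hμ
    linarith
  rw [hH.det_eq_prod_eigenvalues]
  exact Finset.one_le_prod fun i _ => one_le_eigenvalues i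

theorem PosSemidef.det_le_det {A B : Matrix ι ι ℝ} (hA : A.PosSemidef)
    (hAB : (B - A).PosSemidef) : A.det ≤ B.det := by
  by_cases hA_pos : A.PosDef
  · open scoped MatrixOrder in
    obtain ⟨L, hL⟩ := CStarAlgebra.nonneg_iff_eq_star_mul_self.mp hAB.nonneg
    have hA_unit : IsUnit A.det := (isUnit_iff_isUnit_det A).mp hA_pos.isUnit
    have hB : B = A * (1 + A⁻¹ * (Lᴴ * L)) := by
      rw [Matrix.mul_add, mul_nonsing_inv_cancel_left _ _ hA_unit, Matrix.mul_one,
        ← star_eq_conjTranspose, ← hL, add_sub_cancel]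
    have hC : (L * A⁻¹ * Lᴴ).PosSemidef := hA_pos.inv.posSemidef.mul_mul_conjTranspose_same L
    rw [hB, det_mul, ← Matrix.mul_assoc, det_one_add_mul_comm, ← Matrix.mul_assoc]
    exact le_mul_of_one_le_right hA.det_nonneg hC.one_le_det_one_add
  · rw [hA.posDef_iff_det_ne_zero.not_left.mp hA_pos]
    exact (by simpa using hAB.add hA : B.PosSemidef).det_nonneg

end Matrix

theorem det_one_sub_conj_mono {n m : ℕ}
    (MS MT : Matrix (Fin n) (Fin n) ℝ) (Q : Matrix (Fin n) (Fin m) ℝ)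
    (hMS : MS.PosDef) (hMT : MT.PosDef)
    (hST : (MS - MT).PosSemidef)
    (hTQ : (MT - Q * Qᵀ).PosSemidef) :
    ((1 : Matrix (Fin m) (Fin m) ℝ) - Qᵀ * MT⁻¹ * Q).det
      ≤ ((1 : Matrix (Fin m) (Fin m) ℝ) - Qᵀ * MS⁻¹ * Q).det := by
  have hT : (1 - Qᴴ * MT⁻¹ * Q).PosSemidef :=
    (posSemidef_sub_conjTranspose_mul_inv_mul_iff hMT PosDef.one Q).2 (by simpa using hTQ)
  have hST_inv : (Qᴴ * (MT⁻¹ - MS⁻¹) * Q).PosSemidef :=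
    (hMT.posSemidef_inv_sub_inv hMS hST).conjTranspose_mul_mul_same Q
  rw [conjTranspose_eq_transpose_of_trivial] at hT hST_inv
  refine hT.det_le_det ?_
  rwa [sub_sub_sub_cancel_left, ← Matrix.sub_mul, ← Matrix.mul_sub]
end

section
/- Let g : Finset V → ℝ be a nonincreasing α-submodular function with g(∅) = 0, i.e., g(S) - g(S ∪ {k}) ≥ (1-α)(g(T) - g(T ∪ {k})) for all S ⊆ T ⊂ V, k ∈ V, with 0 ≤ α < 1. Then the nondecreasing function F(S) = -g(S) satisfies: the greedy algorithm that iteratively adds the element with the largest marginal gain returns, after n steps, a set S with F(S) ≥ (1 + 1/(1-α))⁻¹ · max_{|T| ≤ n} F(T). -/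
/-!
Let `β = 1 - α`. Enumerate `T \ Sₙ = {t₁, …, tₘ}` with `m ≤ n` and add the `tₗ` to `Sₙ` one at a
time. By α-submodularity the gain of `tₗ` over the current superset of `Sₗ₋₁` is at most `1/β`
times its gain over `Sₗ₋₁`, which by greediness is at most `F(Sₗ) - F(Sₗ₋₁)`. Telescoping gives
`F(T) ≤ F(Sₙ ∪ T) ≤ F(Sₙ) + F(Sₘ)/β ≤ (1 + 1/β) F(Sₙ)`.
-/

open Finset

section

variable {V : Type*} [DecidableEq V]

def IsGreedyChain (g : Finset V → ℝ) (n : ℕ) (S : ℕ → Finset V) : Prop :=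
  ∀ i < n, ∃ k ∉ S i, S (i + 1) = insert k (S i) ∧
    ∀ j ∉ S i, -g (insert j (S i)) ≤ -g (insert k (S i))

namespace IsGreedyChain

variable {g : Finset V → ℝ} {n : ℕ} {S : ℕ → Finset V}

theorem subset_succ (hS : IsGreedyChain g n S) {i : ℕ} (hi : i < n) : S i ⊆ S (i + 1) := by
  obtain ⟨k, -, hk, -⟩ := hS i hi
  exact hk ▸ subset_insert k (S i)

theorem subset_of_le (hS : IsGreedyChain g n S) {i j : ℕ} (hij : i ≤ j) (hjn : j ≤ n) :
    S i ⊆ S j := by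
  induction j, hij using Nat.le_induction with
  | base => exact Subset.rfl
  | succ j _ ih => exact (ih (by omega)).trans (hS.subset_succ (by omega))

theorem le_insert (hS : IsGreedyChain g n S) {i : ℕ} (hi : i < n) {t : V} (ht : t ∉ S i) :
    g (S (i + 1)) ≤ g (insert t (S i)) := by
  obtain ⟨k, -, hk, hmax⟩ := hS i hi
  rw [hk]
  linarith [hmax t ht]

variable {α : ℝ}
  (hsub : ∀ (A B : Finset V) (k : V), A ⊆ B → k ∉ B →
    (1 - α) * (g B - g (insert k B)) ≤ g A - g (insert k A))
include hsub

theorem marginal_le (hS : IsGreedyChain g n S) {i : ℕ} (hi : i < n) {U : Finset V}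
    (hU : S i ⊆ U) {t : V} (ht : t ∉ U) :
    (1 - α) * (g U - g (insert t U)) ≤ g (S i) - g (S (i + 1)) := by
  linarith [hsub _ _ t hU ht, hS.le_insert hi (fun h ↦ ht (hU h))]

theorem marginal_union_le (hS : IsGreedyChain g n S) {A : Finset V} (hA : Disjoint A (S n))
    (hAn : #A ≤ n) :
    (1 - α) * (g (S n) - g (S n ∪ A)) ≤ g (S 0) - g (S #A) := by
  induction A using Finset.induction_on with
  | empty => simp
  | @insert t A htA ih =>
    rw [disjoint_insert_left] at hA
    rw [card_insert_of_notMem htA] at hAn ⊢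
    have hgain := hS.marginal_le hsub (i := #A) (U := S n ∪ A) (t := t) (by omega)
      ((hS.subset_of_le (by omega) le_rfl).trans subset_union_left)
      (by simp [htA, hA.1])
    rw [union_insert]
    linarith [ih hA.2 (by omega)]

end IsGreedyChain

end

theorem greedy_alpha_submodular_guarantee_general {V : Type*} [Fintype V] [DecidableEq V]
    (g : Finset V → ℝ) (α : ℝ) (hα1 : α < 1)
    (hg0 : g ∅ = 0)
    (hmono : ∀ (S : Finset V) (k : V), g (insert k S) ≤ g S)
    (hsub : ∀ (S T : Finset V) (k : V), S ⊆ T → T ⊂ Finset.univ →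
      g S - g (insert k S) ≥ (1 - α) * (g T - g (insert k T)))
    (n : ℕ) (S : ℕ → Finset V)
    (hS0 : S 0 = ∅)
    (hstep : ∀ i < n, ∃ k ∉ S i, S (i + 1) = insert k (S i) ∧
      ∀ j ∉ S i, -g (insert j (S i)) ≤ -g (insert k (S i))) :
    ∀ T : Finset V, T.card ≤ n →
      -g (S n) ≥ (1 + 1 / (1 - α))⁻¹ * (-g T) := by
  intro T hT
  have hS : IsGreedyChain g n S := hstep
  have hanti : Antitone g := antitone_iff_forall_insert_le.2 fun A k _ ↦ hmono A k
  have hm : #(T \ S n) ≤ n := (card_le_card sdiff_subset).trans hT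
  have htelescope := IsGreedyChain.marginal_union_le
    (fun A B k hAB hk ↦ hsub A B k hAB (ssubset_univ_iff.2 fun h ↦ hk (h ▸ mem_univ k)))
    hS sdiff_disjoint hm
  rw [union_sdiff_self_eq_union, hS0, hg0] at htelescope
  have hT_le : g (S n ∪ T) ≤ g T := hanti subset_union_right
  have hSm_le : g (S n) ≤ g (S #(T \ S n)) := hanti (hS.subset_of_le hm le_rfl)
  have hβ : 0 < 1 - α := by linarith
  rw [show (1 + 1 / (1 - α))⁻¹ = (1 - α) / (1 + (1 - α)) by field_simp; ring, ge_iff_le,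
    div_mul_eq_mul_div, div_le_iff₀ (by linarith)]
  nlinarith

theorem greedy_alpha_submodular_guarantee {V : Type*} [Fintype V] [DecidableEq V]
    (g : Finset V → ℝ) (α : ℝ) (hα0 : 0 ≤ α) (hα1 : α < 1)
    (hg0 : g ∅ = 0)
    (hmono : ∀ (S : Finset V) (k : V), g (insert k S) ≤ g S)
    (hsub : ∀ (S T : Finset V) (k : V), S ⊆ T → T ⊂ Finset.univ →
      g S - g (insert k S) ≥ (1 - α) * (g T - g (insert k T)))
    (n : ℕ) (S : ℕ → Finset V)
    (hS0 : S 0 = ∅)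
    (hstep : ∀ i < n, ∃ k ∉ S i, S (i + 1) = insert k (S i) ∧
      ∀ j ∉ S i, -g (insert j (S i)) ≤ -g (insert k (S i))) :
    ∀ T : Finset V, T.card ≤ n →
      -g (S n) ≥ (1 + 1 / (1 - α))⁻¹ * (-g T) :=
  greedy_alpha_submodular_guarantee_general g α hα1 hg0 hmono hsub n S hS0 hstep
end
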